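/- arXiv:1609.08745 — 3 statements merged into one kernel-verified Lean document; each statement's English description precedes it below -/
import Mathlib

section
/- Let θ be a complex number, a, q ∈ ℤ[i] with q ≠ 0 and gcd(a,q) = 1, and suppose θ = a/q + γ where |γ| ≤ C|q|^{-2} with C := 2 + √2. Then for all n₁, n₂ ∈ ℤ[i] with n₁ ≢ n₂ (mod q), one has ‖n₁θ − n₂θ‖ ≥ 1/(√2·|q|) − C·|n₁ − n₂|/|q|². -/
/-!
Write `m = n₁ - n₂` and round `m θ` coordinatewise to a Gaussian integer `n`, so that
`|m θ - n| ≤ √2 ‖m θ‖`. Since `q ∤ m` and `a` is coprime to `q`, the Gaussian integer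
`m a - n q` is nonzero, hence `|m a / q - n| ≥ 1 / |q|`; replacing `a / q` by `θ` moves this
point by at most `|m| |γ| ≤ C |m| / |q|²`.
-/

/-- Distance from a real number to the nearest integer. -/
noncomputable def dInt (t : ℝ) : ℝ := min (Int.fract t) (1 - Int.fract t)

/-- Distance from a complex number to the nearest Gaussian integer in the supremum norm. -/
noncomputable def dGauss (z : ℂ) : ℝ := max (dInt z.re) (dInt z.im)

/-- The complex absolute value of a Gaussian integer. -/
noncomputable def absG (n : GaussianInt) : ℝ := ‖GaussianInt.toComplex n‖

open GaussianInt

lemma GaussianInt.one_le_norm_toComplex {x : GaussianInt} (hx : x ≠ 0) : 1 ≤ ‖(x : ℂ)‖ := by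
  have hnorm : (1 : ℝ) ≤ x.norm := by exact_mod_cast GaussianInt.norm_pos.mpr hx
  rw [Complex.norm_def, ← intCast_real_norm]
  exact Real.one_le_sqrt.mpr hnorm

lemma norm_sub_round_le_sqrt_two_mul_dGauss (z : ℂ) :
    ‖z - ((⟨round z.re, round z.im⟩ : GaussianInt) : ℂ)‖ ≤ Real.sqrt 2 * dGauss z := by
  refine (Complex.norm_le_sqrt_two_mul_max _).trans (le_of_eq ?_)
  simp only [dGauss, dInt, ← abs_sub_round_eq_min, Complex.sub_re, Complex.sub_im,
    re_toComplex, im_toComplex]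

lemma inv_norm_le_norm_mul_div_sub {a q m : GaussianInt} (hq : q ≠ 0) (hcop : IsCoprime a q)
    (hm : ¬ q ∣ m) (n : GaussianInt) : ‖(q : ℂ)‖⁻¹ ≤ ‖(m : ℂ) * (a / q) - n‖ := by
  have hqc : (q : ℂ) ≠ 0 := toComplex_eq_zero.not.mpr hq
  have hne : m * a - n * q ≠ 0 := fun h =>
    hm (hcop.symm.dvd_of_dvd_mul_right ⟨n, by linear_combination h⟩)
  have heq : (m : ℂ) * (a / q) - n = ((m * a - n * q : GaussianInt) : ℂ) / q := by
    simp only [map_sub, map_mul]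
    field_simp
  rw [heq, norm_div, ← one_div]
  exact div_le_div_of_nonneg_right (one_le_norm_toComplex hne) (norm_nonneg _)

lemma inv_norm_sub_le_norm_mul_sub {a q m : GaussianInt} (hq : q ≠ 0) (hcop : IsCoprime a q)
    (hm : ¬ q ∣ m) (θ : ℂ) (n : GaussianInt) :
    ‖(q : ℂ)‖⁻¹ - ‖(m : ℂ)‖ * ‖θ - a / q‖ ≤ ‖(m : ℂ) * θ - n‖ := by
  have hsplit : (m : ℂ) * θ - n = ((m : ℂ) * (a / q) - n) + (m : ℂ) * (θ - a / q) := by ring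
  calc ‖(q : ℂ)‖⁻¹ - ‖(m : ℂ)‖ * ‖θ - a / q‖
      ≤ ‖(m : ℂ) * (a / q) - n‖ - ‖(m : ℂ) * (θ - a / q)‖ := by
        rw [norm_mul]
        linarith [inv_norm_le_norm_mul_div_sub hq hcop hm n]
    _ ≤ ‖(m : ℂ) * θ - n‖ := by
        rw [hsplit]
        exact norm_sub_le_norm_add _ _

theorem spacing_lower_bound (θ : ℂ) (a q : GaussianInt) (hq : q ≠ 0) (hcop : IsCoprime a q)
    (hγ : ‖θ - GaussianInt.toComplex a / GaussianInt.toComplex q‖ ≤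
      (2 + Real.sqrt 2) / absG q ^ 2)
    (n₁ n₂ : GaussianInt) (hn : ¬ q ∣ (n₁ - n₂)) :
    1 / (Real.sqrt 2 * absG q) - (2 + Real.sqrt 2) * absG (n₁ - n₂) / absG q ^ 2 ≤
      dGauss (GaussianInt.toComplex n₁ * θ - GaussianInt.toComplex n₂ * θ) := by
  set m := n₁ - n₂
  set E := (2 + Real.sqrt 2) * absG m / absG q ^ 2
  have hz : (n₁ : ℂ) * θ - n₂ * θ = (m : ℂ) * θ := by simp only [m, map_sub]; ring
  have hE : 0 ≤ E := by unfold E absG; positivity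
  have hperturb : ‖(m : ℂ)‖ * ‖θ - a / q‖ ≤ E := by
    calc ‖(m : ℂ)‖ * ‖θ - a / q‖ ≤ absG m * ((2 + Real.sqrt 2) / absG q ^ 2) :=
          mul_le_mul_of_nonneg_left hγ (norm_nonneg _)
      _ = E := by ring
  have hdist : (absG q)⁻¹ - E ≤ Real.sqrt 2 * dGauss ((m : ℂ) * θ) := by
    calc (absG q)⁻¹ - E ≤ ‖(q : ℂ)‖⁻¹ - ‖(m : ℂ)‖ * ‖θ - a / q‖ := sub_le_sub_left hperturb _
      _ ≤ _ := inv_norm_sub_le_norm_mul_sub hq hcop hn θ _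
      _ ≤ _ := norm_sub_round_le_sqrt_two_mul_dGauss _
  rw [hz]
  calc 1 / (Real.sqrt 2 * absG q) - E ≤ ((absG q)⁻¹ - E) / Real.sqrt 2 := by
        rw [sub_div, mul_comm, ← div_div, one_div]
        gcongr
        exact div_le_self hE (Real.one_le_sqrt.mpr one_le_two)
    _ ≤ dGauss ((m : ℂ) * θ) := by
        rw [div_le_iff₀' (by positivity)]
        exact hdist
end

section
/- Let θ be a complex number, a, q ∈ ℤ[i] with q ≠ 0 and gcd(a,q) = 1, and suppose θ = a/q + γ where |γ| ≤ C|q|^{-2} with C := 2 + √2. Let R ⊂ ℂ be a rectangle {s : a₁ < Re(s) ≤ b₁, a₂ < Im(s) ≤ b₂} with side lengths b₁ − a₁ ≤ |q|/(4C) and b₂ − a₂ ≤ |q|/(4C). Then for all n₁, n₂ ∈ ℤ[i] ∩ R with n₁ ≠ n₂, one has ‖n₁θ − n₂θ‖ ≥ 1/(2√2·|q|). -/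
lemma absG_mul (x y : GaussianInt) : absG (x * y) = absG x * absG y := by
  simp only [absG, map_mul, norm_mul]

lemma one_le_absG {x : GaussianInt} (hx : x ≠ 0) : 1 ≤ absG x := by
  have h : (1 : ℝ) ≤ absG x ^ 2 := by
    rw [absG, Complex.sq_norm, ← GaussianInt.intCast_real_norm]
    exact_mod_cast GaussianInt.norm_pos.2 hx
  exact (one_le_sq_iff₀ (norm_nonneg _)).1 h

lemma absG_le_sqrt_two_mul {n : GaussianInt} {B : ℝ} (hre : |(n : ℂ).re| ≤ B)
    (him : |(n : ℂ).im| ≤ B) : absG n ≤ √2 * B :=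
  (Complex.norm_le_sqrt_two_mul_max _).trans
    (mul_le_mul_of_nonneg_left (max_le hre him) (Real.sqrt_nonneg 2))

lemma not_dvd_of_absG_lt {q n : GaussianInt} (hn : n ≠ 0) (h : absG n < absG q) : ¬ q ∣ n := by
  rintro ⟨c, rfl⟩
  have hc : 1 ≤ absG c := one_le_absG (right_ne_zero_of_mul hn)
  rw [absG_mul] at h
  nlinarith [norm_nonneg (q : ℂ), show absG q = ‖(q : ℂ)‖ from rfl]

lemma inv_absG_le_norm_div_sub {q b : GaussianInt} (hq : q ≠ 0) (hb : ¬ q ∣ b)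
    (m : GaussianInt) : 1 / absG q ≤ ‖(b : ℂ) / q - m‖ := by
  have hq' : (q : ℂ) ≠ 0 := GaussianInt.toComplex_eq_zero.not.2 hq
  have hbm : b - q * m ≠ 0 := fun h => hb ⟨m, sub_eq_zero.1 h⟩
  have hdiv : (b : ℂ) / q - m = ((b - q * m : GaussianInt) : ℂ) / q := by
    rw [map_sub, map_mul]
    field_simp
  rw [hdiv, norm_div]
  exact div_le_div_of_nonneg_right (one_le_absG hbm) (norm_nonneg _)

noncomputable def roundGauss (z : ℂ) : GaussianInt := ⟨round z.re, round z.im⟩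

lemma norm_sub_roundGauss_le (z : ℂ) : ‖z - roundGauss z‖ ≤ √2 * dGauss z := by
  have hmax : max |(z - roundGauss z).re| |(z - roundGauss z).im| = dGauss z := by
    simp only [dGauss, dInt, ← abs_sub_round_eq_min, Complex.sub_re, Complex.sub_im,
      roundGauss, GaussianInt.re_toComplex, GaussianInt.im_toComplex]
  exact hmax ▸ Complex.norm_le_sqrt_two_mul_max _

lemma le_dGauss_mul_of_not_dvd (θ : ℂ) {a q n : GaussianInt} (hq : q ≠ 0) (hna : ¬ q ∣ n * a) :
    (1 / absG q - absG n * ‖θ - a / q‖) / √2 ≤ dGauss (n * θ) := by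
  set m := roundGauss (n * θ)
  have hfar : 1 / absG q ≤ ‖(n : ℂ) * a / q - m‖ := by
    simpa only [map_mul] using inv_absG_le_norm_div_sub hq hna m
  have htri : ‖(n : ℂ) * a / q - m‖ ≤ ‖(n : ℂ) * θ - m‖ + absG n * ‖θ - a / q‖ := by
    rw [absG, ← norm_mul,
      show (n : ℂ) * a / q - m = ((n : ℂ) * θ - m) - n * (θ - a / q) by ring]
    exact norm_sub_le _ _
  rw [div_le_iff₀ (by positivity)]
  linarith [norm_sub_roundGauss_le ((n : ℂ) * θ)]

theorem spacing_in_rectangle (θ : ℂ) (a q : GaussianInt) (hq : q ≠ 0) (hcop : IsCoprime a q)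
    (hγ : ‖θ - GaussianInt.toComplex a / GaussianInt.toComplex q‖ ≤
      (2 + Real.sqrt 2) / absG q ^ 2)
    (a₁ b₁ a₂ b₂ : ℝ)
    (hside₁ : b₁ - a₁ ≤ absG q / (4 * (2 + Real.sqrt 2)))
    (hside₂ : b₂ - a₂ ≤ absG q / (4 * (2 + Real.sqrt 2)))
    (n₁ n₂ : GaussianInt)
    (hn₁ : a₁ < (GaussianInt.toComplex n₁).re ∧ (GaussianInt.toComplex n₁).re ≤ b₁ ∧
      a₂ < (GaussianInt.toComplex n₁).im ∧ (GaussianInt.toComplex n₁).im ≤ b₂)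
    (hn₂ : a₁ < (GaussianInt.toComplex n₂).re ∧ (GaussianInt.toComplex n₂).re ≤ b₁ ∧
      a₂ < (GaussianInt.toComplex n₂).im ∧ (GaussianInt.toComplex n₂).im ≤ b₂)
    (hne : n₁ ≠ n₂) :
    1 / (2 * Real.sqrt 2 * absG q) ≤
      dGauss (GaussianInt.toComplex n₁ * θ - GaussianInt.toComplex n₂ * θ) := by
  set B := absG q / (4 * (2 + √2))
  set n := n₁ - n₂
  have hq₀ : 0 < absG q := lt_of_lt_of_le one_pos (one_le_absG hq)
  have hs : √2 < 2 := by rw [Real.sqrt_lt' two_pos]; norm_num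
  have hs₀ : 0 < √2 := by positivity
  have hn : absG n ≤ √2 * B := by
    apply absG_le_sqrt_two_mul <;> simp only [n, map_sub, Complex.sub_re, Complex.sub_im] <;>
      exact abs_sub_le_iff.2 ⟨by linarith, by linarith⟩
  have hnq : absG n < absG q := hn.trans_lt <| by
    rw [mul_div_assoc', div_lt_iff₀ (by positivity)]
    nlinarith
  have hna : ¬ q ∣ n * a := fun h =>
    not_dvd_of_absG_lt (sub_ne_zero.2 hne) hnq (hcop.symm.dvd_of_dvd_mul_right h)
  have herr : absG n * ‖θ - a / q‖ ≤ √2 / (4 * absG q) :=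
    (mul_le_mul hn hγ (norm_nonneg _) (by positivity)).trans_eq (by simp only [B]; field_simp)
  have hz : (n₁ : ℂ) * θ - n₂ * θ = n * θ := by rw [map_sub]; ring
  rw [hz]
  refine le_trans ?_ (le_dGauss_mul_of_not_dvd θ hq hna)
  rw [div_le_div_iff₀ (by positivity) hs₀]
  have hsq : √2 * √2 = 2 := Real.mul_self_sqrt two_pos.le
  field_simp at herr ⊢
  nlinarith
end

section
/- Let θ be a complex number, a, q ∈ ℤ[i] with q ≠ 0 and gcd(a,q) = 1, and suppose θ = a/q + γ where |γ| ≤ C|q|^{-2} with C := 2 + √2. Then for every n ∈ ℤ[i] with 0 < N(n) ≤ |q|²/(8C²), one has ‖nθ‖ ≥ 1/(√8·|q|). -/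
/-- The norm `N(n) = |n|²` of a Gaussian integer, as a real number. -/
noncomputable def Nm (n : GaussianInt) : ℝ := ‖GaussianInt.toComplex n‖ ^ 2

/-!
Put `α = n a / q`. Since `a` is coprime to `q` and `0 < N(n) < N(q)`, `q ∤ n a`, so `α` lies at
distance at least `1/|q|` from every Gaussian integer, whence `‖α‖ ≥ 1/(√2 |q|)`. On the other hand
`|nθ - α| = |n| |γ| ≤ 1/(√8 |q|)` by the bound on `N(n)`, and `‖·‖` is `1`-Lipschitz, so
`‖nθ‖ ≥ 1/(√2 |q|) - 1/(√8 |q|) = 1/(√8 |q|)`.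
-/

lemma dInt_eq_abs_sub_round (t : ℝ) : dInt t = |t - round t| := (abs_sub_round_eq_min t).symm

lemma dInt_le_add_abs_sub (s t : ℝ) : dInt s ≤ dInt t + |s - t| := by
  rw [dInt_eq_abs_sub_round, dInt_eq_abs_sub_round]
  calc |s - round s| ≤ |s - round t| := round_le s (round t)
    _ = |(t - round t) + (s - t)| := by ring_nf
    _ ≤ |t - round t| + |s - t| := abs_add_le _ _

lemma dGauss_le_add_norm_sub (z w : ℂ) : dGauss z ≤ dGauss w + ‖z - w‖ := by
  have hre : |z.re - w.re| ≤ ‖z - w‖ := by simpa using Complex.abs_re_le_norm (z - w)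
  have him : |z.im - w.im| ≤ ‖z - w‖ := by simpa using Complex.abs_im_le_norm (z - w)
  unfold dGauss
  apply max_le
  · linarith [dInt_le_add_abs_sub z.re w.re, le_max_left (dInt w.re) (dInt w.im)]
  · linarith [dInt_le_add_abs_sub z.im w.im, le_max_right (dInt w.re) (dInt w.im)]

lemma exists_norm_sub_le_sqrt_two_mul_dGauss (z : ℂ) :
    ∃ g : GaussianInt, ‖z - g‖ ≤ √2 * dGauss z := by
  refine ⟨⟨round z.re, round z.im⟩, ?_⟩
  convert Complex.norm_le_sqrt_two_mul_max _ using 3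
  simp [dGauss, dInt_eq_abs_sub_round, GaussianInt.toComplex_def₂]

lemma one_le_norm_toComplex {m : GaussianInt} (hm : m ≠ 0) : 1 ≤ ‖(m : ℂ)‖ := by
  have hnorm : (1 : ℝ) ≤ m.norm := by exact_mod_cast GaussianInt.norm_pos.mpr hm
  rw [GaussianInt.intCast_real_norm, Complex.normSq_eq_norm_sq] at hnorm
  exact (one_le_sq_iff₀ (norm_nonneg _)).mp hnorm

lemma norm_toComplex_le_of_dvd {q n : GaussianInt} (hn : n ≠ 0) (hqn : q ∣ n) :
    ‖(q : ℂ)‖ ≤ ‖(n : ℂ)‖ := by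
  obtain ⟨d, rfl⟩ := hqn
  have hd : d ≠ 0 := right_ne_zero_of_mul hn
  rw [GaussianInt.toComplex_mul, norm_mul]
  exact le_mul_of_one_le_right (norm_nonneg _) (one_le_norm_toComplex hd)

lemma not_dvd_mul_of_norm_lt {a q n : GaussianInt} (hcop : IsCoprime a q) (hn : n ≠ 0)
    (hnq : ‖(n : ℂ)‖ < ‖(q : ℂ)‖) : ¬ q ∣ n * a := fun hdvd =>
  (norm_toComplex_le_of_dvd hn (hcop.symm.dvd_of_dvd_mul_right hdvd)).not_gt hnq

lemma inv_norm_le_norm_div_sub {b q : GaussianInt} (hq : q ≠ 0) (hqb : ¬ q ∣ b)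
    (g : GaussianInt) : 1 / ‖(q : ℂ)‖ ≤ ‖(b : ℂ) / q - g‖ := by
  have hqC : (q : ℂ) ≠ 0 := GaussianInt.toComplex_eq_zero.not.mpr hq
  have hbg : b - g * q ≠ 0 := fun h => hqb ⟨g, by linear_combination h⟩
  have : (b : ℂ) / q - g = ((b - g * q : GaussianInt) : ℂ) / q := by
    rw [map_sub, map_mul]; field_simp
  rw [this, norm_div]
  gcongr
  exact one_le_norm_toComplex hbg

lemma inv_norm_div_sqrt_two_le_dGauss_div {b q : GaussianInt} (hq : q ≠ 0) (hqb : ¬ q ∣ b) :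
    1 / ‖(q : ℂ)‖ / √2 ≤ dGauss ((b : ℂ) / q) := by
  obtain ⟨g, hg⟩ := exists_norm_sub_le_sqrt_two_mul_dGauss ((b : ℂ) / q)
  rw [div_le_iff₀' (by positivity)]
  exact (inv_norm_le_norm_div_sub hq hqb g).trans hg

lemma norm_toComplex_le_of_Nm_le {n q : GaussianInt} {c : ℝ} (hc : 0 < c)
    (h : Nm n ≤ absG q ^ 2 / c ^ 2) : ‖(n : ℂ)‖ ≤ absG q / c := by
  rw [← div_pow] at h
  exact (pow_le_pow_iff_left₀ (norm_nonneg _) (div_nonneg (norm_nonneg _) hc.le)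
    two_ne_zero).mp h

lemma norm_toComplex_lt_of_Nm_le {n q : GaussianInt} {c : ℝ} (hc : 1 < c) (hn : n ≠ 0)
    (h : Nm n ≤ absG q ^ 2 / c ^ 2) : ‖(n : ℂ)‖ < ‖(q : ℂ)‖ := by
  have hle := norm_toComplex_le_of_Nm_le (zero_lt_one.trans hc) h
  have hq : 0 < absG q := (div_pos_iff_of_pos_right (zero_lt_one.trans hc)).mp <|
    (norm_pos_iff.mpr (GaussianInt.toComplex_eq_zero.not.mpr hn)).trans_le hle
  exact hle.trans_lt (div_lt_self hq hc)

theorem small_norm_lower_bound_general (θ : ℂ) (a q : GaussianInt) (hcop : IsCoprime a q)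
    (hγ : ‖θ - GaussianInt.toComplex a / GaussianInt.toComplex q‖ ≤
      (2 + Real.sqrt 2) / absG q ^ 2)
    (n : GaussianInt) (hn0 : 0 < Nm n)
    (hnz : Nm n ≤ absG q ^ 2 / (8 * (2 + Real.sqrt 2) ^ 2)) :
    1 / (Real.sqrt 8 * absG q) ≤ dGauss (GaussianInt.toComplex n * θ) := by
  set C := 2 + √2 with hC
  set Q := absG q
  set α : ℂ := ((n * a : GaussianInt) : ℂ) / q
  have hsqrt8 : √8 = 2 * √2 := by
    rw [show (8 : ℝ) = 2 ^ 2 * 2 by norm_num, Real.sqrt_mul' _ zero_le_two,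
      Real.sqrt_sq zero_le_two]
  have hC0 : 0 < C := by positivity
  have h8C : 1 < √8 * C := by
    rw [hsqrt8, hC]; nlinarith [Real.sqrt_nonneg 2, Real.sq_sqrt zero_le_two]
  have h8C₀ := zero_lt_one.trans h8C
  rw [show 8 * C ^ 2 = (√8 * C) ^ 2 by rw [mul_pow, Real.sq_sqrt (by norm_num)]] at hnz
  have hn : n ≠ 0 := by rintro rfl; simp [Nm] at hn0
  have hnq := norm_toComplex_lt_of_Nm_le h8C hn hnz
  have hq : q ≠ 0 :=
    GaussianInt.toComplex_eq_zero.not.mp (norm_pos_iff.mp ((norm_nonneg _).trans_lt hnq))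
  have hα : 2 * (1 / (√8 * Q)) ≤ dGauss α := by
    convert inv_norm_div_sqrt_two_le_dGauss_div hq (not_dvd_mul_of_norm_lt hcop hn hnq) using 1
    rw [hsqrt8]
    field_simp
    rfl
  have hpert : ‖(n : ℂ) * θ - α‖ ≤ 1 / (√8 * Q) :=
    calc ‖(n : ℂ) * θ - α‖ = ‖(n : ℂ)‖ * ‖θ - a / q‖ := by
          rw [← norm_mul, mul_sub, ← mul_div_assoc, ← map_mul]
      _ ≤ Q / (√8 * C) * (C / Q ^ 2) :=
          mul_le_mul (norm_toComplex_le_of_Nm_le h8C₀ hnz) hγ (norm_nonneg _)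
            (div_nonneg (norm_nonneg _) h8C₀.le)
      _ = 1 / (√8 * Q) := by field_simp [hC0.ne']
  linarith [dGauss_le_add_norm_sub α (n * θ), norm_sub_rev α (n * θ)]

theorem small_norm_lower_bound (θ : ℂ) (a q : GaussianInt) (hq : q ≠ 0) (hcop : IsCoprime a q)
    (hγ : ‖θ - GaussianInt.toComplex a / GaussianInt.toComplex q‖ ≤
      (2 + Real.sqrt 2) / absG q ^ 2)
    (n : GaussianInt) (hn0 : 0 < Nm n)
    (hnz : Nm n ≤ absG q ^ 2 / (8 * (2 + Real.sqrt 2) ^ 2)) :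
    1 / (Real.sqrt 8 * absG q) ≤ dGauss (GaussianInt.toComplex n * θ) :=
  small_norm_lower_bound_general θ a q hcop hγ n hn0 hnz
end
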